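/- arXiv:2407.15413 — 2 statements merged into one kernel-verified Lean document; each statement's English description precedes it below -/
import Mathlib

section
/- The total quantum Fisher information of a LOO basis is bounded by d−1: for any positive definite d×d density matrix ρ and any orthonormal (Hilbert–Schmidt) basis G_1,…,G_{d²} of Hermitian d×d matrices including G_1 = 𝟙/√d, one has Σ_μ F(ρ, G_μ) ≤ d − 1. -/
open Matrix BigOperators Kronecker

/-- Quantum Fisher information of an observable `A` with respect to a state
given by spectral data: eigenvalues `lam` and orthonormal eigenvectors `v`. -/
noncomputable def qfi {n : Type*} [Fintype n] (lam : n → ℝ) (v : n → n → ℂ)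
    (A : Matrix n n ℂ) : ℝ :=
  ∑ k, ∑ l, (lam k - lam l) ^ 2 / (2 * (lam k + lam l)) *
    ‖star (v k) ⬝ᵥ (A *ᵥ v l)‖ ^ 2

theorem total_qfi_loo_bound {d : ℕ} (hd : 0 < d) (lam : Fin d → ℝ)
    (v : Fin d → Fin d → ℂ) (G : Fin (d ^ 2) → Matrix (Fin d) (Fin d) ℂ)
    (hpos : ∀ k, 0 < lam k) (htr : ∑ k, lam k = 1)
    (hortho : ∀ k l, star (v k) ⬝ᵥ v l = if k = l then 1 else 0)
    (hG : ∀ μ, (G μ).IsHermitian)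
    (horth : ∀ μ ν, (G μ * G ν).trace = if μ = ν then 1 else 0)
    (hident : ∃ μ0, G μ0 = ((1 / Real.sqrt d : ℝ) : ℂ) • (1 : Matrix (Fin d) (Fin d) ℂ)) :
    ∑ μ, qfi lam v (G μ) ≤ (d : ℝ) - 1 := by
  classical
  have hconj : ∀ μ (i j : Fin d), (starRingEnd ℂ) (G μ i j) = G μ j i := by
    intro μ i j
    have h := hG μ
    have h2 : (G μ)ᴴ j i = G μ j i := by rw [h]
    simpa [Matrix.conjTranspose_apply] using h2
  set f : Fin (d ^ 2) → EuclideanSpace ℂ (Fin d × Fin d) :=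
    fun μ => WithLp.toLp 2 (fun p : Fin d × Fin d => G μ p.1 p.2) with hf
  have hfon : Orthonormal ℂ f := by
    rw [orthonormal_iff_ite]
    intro μ ν
    have h1 : (inner ℂ (f μ) (f ν) : ℂ)
        = ∑ p : Fin d × Fin d, (G μ p.2 p.1) * (G ν p.1 p.2) := by
      simp [PiLp.inner_apply, RCLike.inner_apply, hf, hconj]
      exact Finset.sum_congr rfl fun _ _ => mul_comm _ _
    rw [h1, ← horth μ ν, Matrix.trace, Fintype.sum_prod_type, Finset.sum_comm]
    simp [Matrix.mul_apply, Matrix.diag]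
  -- each mode sum is at most 1 by Bessel's inequality
  have hnormv : ∀ m : Fin d, ∑ i, ‖v m i‖ ^ 2 = 1 := by
    intro m
    have h := hortho m m
    simp [dotProduct] at h
    have h2 : ((∑ i, ‖v m i‖ ^ 2 : ℝ) : ℂ) = 1 := by
      push_cast
      rw [← h]
      refine Finset.sum_congr rfl fun i _ => ?_
      rw [RCLike.conj_mul]
      norm_cast
    exact_mod_cast h2
  have key : ∀ k l : Fin d, ∑ μ, ‖star (v k) ⬝ᵥ (G μ *ᵥ v l)‖ ^ 2 ≤ 1 := by
    intro k l
    set B : EuclideanSpace ℂ (Fin d × Fin d) :=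
      WithLp.toLp 2 (fun p : Fin d × Fin d => v k p.1 * (starRingEnd ℂ) (v l p.2)) with hB
    have hBnorm : ‖B‖ ^ 2 = 1 := by
      rw [EuclideanSpace.norm_eq,
        Real.sq_sqrt (Finset.sum_nonneg fun _ _ => sq_nonneg _)]
      rw [Fintype.sum_prod_type]
      simp only [hB, PiLp.toLp_apply, norm_mul, mul_pow, RCLike.norm_conj]
      rw [← Finset.sum_mul_sum, hnormv k, hnormv l, one_mul]
    have hinner : ∀ μ, ‖(inner ℂ (f μ) B : ℂ)‖ = ‖star (v k) ⬝ᵥ (G μ *ᵥ v l)‖ := by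
      intro μ
      have hd1 : star (v k) ⬝ᵥ (G μ *ᵥ v l)
          = ∑ i, ∑ j, (starRingEnd ℂ) (v k i) * (G μ i j * v l j) := by
        simp [dotProduct, mulVec, Finset.mul_sum]
      have h2 : (inner ℂ (f μ) B : ℂ)
          = (starRingEnd ℂ) (star (v k) ⬝ᵥ (G μ *ᵥ v l)) := by
        rw [hd1, map_sum]
        rw [PiLp.inner_apply, Fintype.sum_prod_type]
        refine Finset.sum_congr rfl fun i _ => ?_
        rw [map_sum]
        refine Finset.sum_congr rfl fun j _ => ?_
        simp only [RCLike.inner_apply, hf, hB, PiLp.toLp_apply, _root_.map_mul, Complex.conj_conj]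
        ring
      rw [h2, RCLike.norm_conj]
    calc ∑ μ, ‖star (v k) ⬝ᵥ (G μ *ᵥ v l)‖ ^ 2
        = ∑ μ, ‖(inner ℂ (f μ) B : ℂ)‖ ^ 2 := by
          refine Finset.sum_congr rfl fun μ _ => ?_
          rw [hinner]
      _ ≤ ‖B‖ ^ 2 := hfon.sum_inner_products_le B
      _ = 1 := hBnorm
  -- rearrange the total sum
  have step1 : ∑ μ, qfi lam v (G μ)
      = ∑ k, ∑ l, (lam k - lam l) ^ 2 / (2 * (lam k + lam l)) *
          ∑ μ, ‖star (v k) ⬝ᵥ (G μ *ᵥ v l)‖ ^ 2 := by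
    unfold qfi
    rw [Finset.sum_comm]
    refine Finset.sum_congr rfl fun k _ => ?_
    rw [Finset.sum_comm]
    refine Finset.sum_congr rfl fun l _ => ?_
    rw [Finset.mul_sum]
  have step2 : ∀ k l : Fin d,
      (lam k - lam l) ^ 2 / (2 * (lam k + lam l)) *
        (∑ μ, ‖star (v k) ⬝ᵥ (G μ *ᵥ v l)‖ ^ 2)
      ≤ if k = l then 0 else (lam k + lam l) / 2 := by
    intro k l
    by_cases hkl : k = l
    · subst hkl
      simp
    · rw [if_neg hkl]
      have hs : 0 < lam k + lam l := add_pos (hpos k) (hpos l)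
      have hc0 : 0 ≤ (lam k - lam l) ^ 2 / (2 * (lam k + lam l)) :=
        div_nonneg (sq_nonneg _) (by linarith)
      have hcle : (lam k - lam l) ^ 2 / (2 * (lam k + lam l)) ≤ (lam k + lam l) / 2 := by
        rw [div_le_div_iff₀ (by linarith) (by norm_num : (0:ℝ) < 2)]
        nlinarith [mul_pos (hpos k) (hpos l)]
      calc (lam k - lam l) ^ 2 / (2 * (lam k + lam l)) *
            (∑ μ, ‖star (v k) ⬝ᵥ (G μ *ᵥ v l)‖ ^ 2)
          ≤ (lam k - lam l) ^ 2 / (2 * (lam k + lam l)) * 1 :=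
            mul_le_mul_of_nonneg_left (key k l) hc0
        _ = (lam k - lam l) ^ 2 / (2 * (lam k + lam l)) := mul_one _
        _ ≤ (lam k + lam l) / 2 := hcle
  have step3 : ∑ k, ∑ l : Fin d,
      (if k = l then (0:ℝ) else (lam k + lam l) / 2) = (d : ℝ) - 1 := by
    have hrow : ∀ k : Fin d, ∑ l : Fin d,
        (if k = l then (0:ℝ) else (lam k + lam l) / 2)
        = ((d : ℝ) * lam k + 1) / 2 - lam k := by
      intro k
      have hsplit : ∀ l : Fin d, (if k = l then (0:ℝ) else (lam k + lam l) / 2)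
          = (lam k + lam l) / 2 - (if k = l then (lam k + lam l) / 2 else 0) := by
        intro l
        by_cases h : k = l <;> simp [h]
      rw [Finset.sum_congr rfl fun l _ => hsplit l, Finset.sum_sub_distrib,
        Finset.sum_ite_eq, if_pos (Finset.mem_univ k)]
      rw [← Finset.sum_div, Finset.sum_add_distrib, Finset.sum_const, htr,
        Finset.card_univ, Fintype.card_fin]
      push_cast
      ring
    rw [Finset.sum_congr rfl fun k _ => hrow k, Finset.sum_sub_distrib, htr,
      ← Finset.sum_div, Finset.sum_add_distrib, ← Finset.mul_sum, htr,
      Finset.sum_const, Finset.card_univ, Fintype.card_fin]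
    push_cast
    ring
  calc ∑ μ, qfi lam v (G μ)
      = ∑ k, ∑ l, (lam k - lam l) ^ 2 / (2 * (lam k + lam l)) *
          ∑ μ, ‖star (v k) ⬝ᵥ (G μ *ᵥ v l)‖ ^ 2 := step1
    _ ≤ ∑ k, ∑ l : Fin d, (if k = l then (0:ℝ) else (lam k + lam l) / 2) :=
        Finset.sum_le_sum fun k _ => Finset.sum_le_sum fun l _ => step2 k l
    _ = (d : ℝ) - 1 := step3
end

section
/- For a d-dimensional SIC-POVM E = (E_1,…,E_{d²}), the total quantum Fisher information satisfies Σ_μ F(ρ, E_μ) ≤ (d−1)/(d(d+1)) for every positive definite density matrix ρ. -/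
open Matrix BigOperators Kronecker


private lemma sum_ite_pair {n : ℕ} (μ : Fin n) (a b : ℝ) :
    ∑ ν : Fin n, (if μ = ν then a else b) = a + ((n : ℝ) - 1) * b := by
  classical
  have h : ∀ ν : Fin n, (if μ = ν then a else b) = (if μ = ν then a - b else 0) + b := by
    intro ν; split <;> ring
  simp_rw [h]
  rw [Finset.sum_add_distrib, Finset.sum_ite_eq, Finset.sum_const]
  have : μ ∈ Finset.univ := Finset.mem_univ μ
  simp only [if_pos this, Finset.card_univ, Fintype.card_fin, nsmul_eq_mul]
  have hn : (1:ℕ) ≤ n := Nat.one_le_iff_ne_zero.mpr (by rintro rfl; exact μ.elim0)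
  ring

private lemma sic_key {d : ℕ} (hd : 0 < d) (A : Fin (d ^ 2) → Fin d → ℂ)
    (hb : ∀ μ ν : Fin (d ^ 2),
      Complex.normSq (∑ k, (starRingEnd ℂ) (A μ k) * A ν k)
        = ((d : ℝ) * (if μ = ν then 1 else 0) + 1) / (d + 1))
    (k l : Fin d) (hkl : k ≠ l) :
    ∑ μ, Complex.normSq (A μ k) * Complex.normSq (A μ l) = (d : ℝ) / ((d : ℝ) + 1) := by
  classical
  have hdR : (0:ℝ) < d := by exact_mod_cast hd
  have hd1 : (d:ℝ) + 1 ≠ 0 := by positivity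
  set b : Fin (d ^ 2) → Fin (d ^ 2) → ℂ :=
    fun μ ν => ∑ k, (starRingEnd ℂ) (A μ k) * A ν k with hbdef
  -- b μ μ = 1
  have hbreal : ∀ μ, b μ μ = ((∑ k, Complex.normSq (A μ k) : ℝ) : ℂ) := by
    intro μ
    show (∑ k, (starRingEnd ℂ) (A μ k) * A μ k) = _
    push_cast
    refine Finset.sum_congr rfl fun k _ => ?_
    rw [mul_comm, Complex.mul_conj]
  have hb1 : ∀ μ, b μ μ = 1 := by
    intro μ
    set r : ℝ := ∑ k, Complex.normSq (A μ k) with hr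
    have hr0 : 0 ≤ r := Finset.sum_nonneg fun _ _ => Complex.normSq_nonneg _
    have h2 : r * r = 1 := by
      have h := hb μ μ
      have hsum : (∑ k : Fin d, (starRingEnd ℂ) (A μ k) * A μ k) = ((r : ℝ) : ℂ) :=
        hbreal μ
      rw [hsum, Complex.normSq_ofReal, if_pos rfl] at h
      rw [h]; field_simp
    have : r = 1 := by nlinarith
    rw [hbreal, ← hr, this]; norm_num
  have hbsymm : ∀ μ ν, b ν μ = (starRingEnd ℂ) (b μ ν) := by
    intro μ ν
    show (∑ k, (starRingEnd ℂ) (A ν k) * A μ k)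
        = (starRingEnd ℂ) (∑ k, (starRingEnd ℂ) (A μ k) * A ν k)
    rw [map_sum]
    refine Finset.sum_congr rfl fun k _ => ?_
    rw [_root_.map_mul, Complex.conj_conj, mul_comm]
  -- the vectors w μ = A μ ⊗ A μ
  set w : Fin (d ^ 2) → Fin d × Fin d → ℂ := fun μ x => A μ x.1 * A μ x.2 with hwdef
  have hw : ∀ μ ν, ∑ x : Fin d × Fin d, (starRingEnd ℂ) (w μ x) * w ν x = (b μ ν) ^ 2 := by
    intro μ ν
    rw [sq, hbdef, Finset.sum_mul_sum, Fintype.sum_prod_type]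
    refine Finset.sum_congr rfl fun i _ => Finset.sum_congr rfl fun j _ => ?_
    simp only [hwdef, _root_.map_mul]
    ring
  -- Gram matrices
  set M : Matrix (Fin d × Fin d) (Fin (d ^ 2)) ℂ := Matrix.of (fun x μ => w μ x) with hM
  set T : Matrix (Fin d × Fin d) (Fin d × Fin d) ℂ := M * Mᴴ with hT
  have hTxy : ∀ x y, T x y = ∑ μ, w μ x * (starRingEnd ℂ) (w μ y) := by
    intro x y
    simp [hT, Matrix.mul_apply, Matrix.conjTranspose_apply, hM]
  set N : Matrix (Fin (d ^ 2)) (Fin (d ^ 2)) ℂ := Mᴴ * M with hN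
  have hNent : ∀ μ ν, N μ ν = (b μ ν) ^ 2 := by
    intro μ ν
    rw [← hw μ ν]
    simp [hN, Matrix.mul_apply, Matrix.conjTranspose_apply, hM]
  -- E1 : the pure T·T̄ part
  have hE1 : ∑ x : Fin d × Fin d, ∑ y : Fin d × Fin d, T x y * (starRingEnd ℂ) (T x y)
      = ((∑ μ, ∑ ν, (Complex.normSq (b μ ν)) ^ 2 : ℝ) : ℂ) := by
    have h1 : ∑ x : Fin d × Fin d, ∑ y : Fin d × Fin d, T x y * (starRingEnd ℂ) (T x y)
        = Matrix.trace (T * Tᴴ) := by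
      simp [Matrix.trace, Matrix.mul_apply, Matrix.conjTranspose_apply, Matrix.diag]
    have h2 : Matrix.trace (T * Tᴴ) = Matrix.trace (N * N) := by
      have hTH : Tᴴ = T := by
        rw [hT, Matrix.conjTranspose_mul, Matrix.conjTranspose_conjTranspose]
      rw [hTH, hT, hN]
      calc Matrix.trace ((M * Mᴴ) * (M * Mᴴ))
          = Matrix.trace (M * (Mᴴ * (M * Mᴴ))) := by rw [Matrix.mul_assoc]
        _ = Matrix.trace ((Mᴴ * (M * Mᴴ)) * M) := Matrix.trace_mul_comm _ _
        _ = Matrix.trace ((Mᴴ * M) * (Mᴴ * M)) := by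
            rw [Matrix.mul_assoc, Matrix.mul_assoc, ← Matrix.mul_assoc]
    have h3 : Matrix.trace (N * N) = ∑ μ, ∑ ν, N μ ν * N ν μ := by
      simp [Matrix.trace, Matrix.mul_apply, Matrix.diag]
    rw [h1, h2, h3]
    push_cast
    refine Finset.sum_congr rfl fun μ _ => Finset.sum_congr rfl fun ν _ => ?_
    rw [hNent, hNent, hbsymm μ ν, ← mul_pow, Complex.mul_conj]
  -- closed form for the E1 value
  have hE1val : (∑ μ, ∑ ν, (Complex.normSq (b μ ν)) ^ 2 : ℝ)
      = (d:ℝ)^2 * (1 + ((d:ℝ)^2 - 1) * (1/((d:ℝ)+1))^2) := by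
    have hval : ∀ μ ν : Fin (d ^ 2),
        (Complex.normSq (b μ ν)) ^ 2 = if μ = ν then (1:ℝ) else (1/((d:ℝ)+1))^2 := by
      intro μ ν
      have h : Complex.normSq (b μ ν) = ((d : ℝ) * (if μ = ν then 1 else 0) + 1) / (d + 1) :=
        hb μ ν
      rw [h]; split_ifs with hh
      · rw [mul_one]; field_simp
      · rw [mul_zero, zero_add]
    simp_rw [hval]
    have hrow : ∀ μ : Fin (d ^ 2),
        ∑ ν, (if μ = ν then (1:ℝ) else (1/((d:ℝ)+1))^2)
          = 1 + ((d:ℝ)^2 - 1) * (1/((d:ℝ)+1))^2 := by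
      intro μ; rw [sum_ite_pair]; push_cast; ring
    simp_rw [hrow]
    rw [Finset.sum_const, Finset.card_univ, Fintype.card_fin, nsmul_eq_mul]
    push_cast; ring
  -- the symmetrizer S
  set c2 : ℝ := (d:ℝ) / ((d:ℝ) + 1) with hc2
  set S : Matrix (Fin d × Fin d) (Fin d × Fin d) ℂ := Matrix.of (fun x y =>
    (c2 : ℂ) * ((if x = y then (1:ℂ) else 0) + (if x = (y.2, y.1) then (1:ℂ) else 0))) with hS
  have hcond : ∀ x y : Fin d × Fin d, (x = (y.2, y.1)) ↔ ((x.2, x.1) = y) := by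
    intro x y
    constructor
    · rintro rfl; rfl
    · rintro rfl; rfl
  have hSconj : ∀ x y, (starRingEnd ℂ) (S x y) = S x y := by
    intro x y
    simp [hS, apply_ite (starRingEnd ℂ), Complex.conj_ofReal]
  have hwsym : ∀ μ (x : Fin d × Fin d), w μ (x.2, x.1) = w μ x := by
    intro μ x; simp [hwdef, mul_comm]
  have hTone : ∀ μ, ∑ x : Fin d × Fin d, w μ x * (starRingEnd ℂ) (w μ x) = 1 := by
    intro μ
    calc ∑ x : Fin d × Fin d, w μ x * (starRingEnd ℂ) (w μ x)
        = ∑ x : Fin d × Fin d, (starRingEnd ℂ) (w μ x) * w μ x :=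
          Finset.sum_congr rfl fun x _ => mul_comm _ _
      _ = (b μ μ) ^ 2 := hw μ μ
      _ = 1 := by rw [hb1]; norm_num
  have hTdiag : ∑ x : Fin d × Fin d, T x x = ((d:ℝ)^2 : ℝ) := by
    simp_rw [hTxy]
    rw [Finset.sum_comm]
    simp_rw [hTone]
    rw [Finset.sum_const, Finset.card_univ, Fintype.card_fin, nsmul_eq_mul, mul_one]
    push_cast
    ring
  have hTswap : ∑ x : Fin d × Fin d, T x (x.2, x.1) = ((d:ℝ)^2 : ℝ) := by
    simp_rw [hTxy, hwsym]
    rw [Finset.sum_comm]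
    simp_rw [hTone]
    rw [Finset.sum_const, Finset.card_univ, Fintype.card_fin, nsmul_eq_mul, mul_one]
    push_cast
    ring
  have hE2 : ∑ x : Fin d × Fin d, ∑ y : Fin d × Fin d, T x y * (starRingEnd ℂ) (S x y)
      = ((c2 * ((d:ℝ)^2 + (d:ℝ)^2) : ℝ) : ℂ) := by
    have hx : ∀ x : Fin d × Fin d, ∑ y, T x y * (starRingEnd ℂ) (S x y)
        = (c2 : ℂ) * (T x x + T x (x.2, x.1)) := by
      intro x
      have hterm : ∀ y, T x y * (starRingEnd ℂ) (S x y)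
          = (c2 : ℂ) * ((if x = y then T x y else 0) + (if (x.2, x.1) = y then T x y else 0)) := by
        intro y
        rw [hSconj]
        simp only [hS, Matrix.of_apply, hcond]
        split_ifs <;> ring
      simp_rw [hterm]
      rw [← Finset.mul_sum, Finset.sum_add_distrib, Finset.sum_ite_eq, Finset.sum_ite_eq]
      simp
    simp_rw [hx]
    rw [← Finset.mul_sum, Finset.sum_add_distrib, hTdiag, hTswap]
    push_cast
    ring
  have hE3 : ∑ x : Fin d × Fin d, ∑ y : Fin d × Fin d, S x y * (starRingEnd ℂ) (T x y)
      = ((c2 * ((d:ℝ)^2 + (d:ℝ)^2) : ℝ) : ℂ) := by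
    have hconjswap : ∀ x y : Fin d × Fin d,
        S x y * (starRingEnd ℂ) (T x y) = (starRingEnd ℂ) (T x y * (starRingEnd ℂ) (S x y)) := by
      intro x y
      rw [_root_.map_mul, Complex.conj_conj]
      ring
    simp_rw [hconjswap, ← map_sum]
    rw [hE2, Complex.conj_ofReal]
  have hE4 : ∑ x : Fin d × Fin d, ∑ y : Fin d × Fin d, S x y * (starRingEnd ℂ) (S x y)
      = ((c2^2 * (2 * (d:ℝ)^2 + 2 * (d:ℝ)) : ℝ) : ℂ) := by
    have hterm : ∀ x y : Fin d × Fin d, S x y * (starRingEnd ℂ) (S x y)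
        = (c2 : ℂ)^2 * ((if x = y then 1 else 0) + (if (x.2, x.1) = y then 1 else 0)
            + (if x = y then (if (x.2, x.1) = y then (2:ℂ) else 0) else 0)) := by
      intro x y
      rw [hSconj]
      simp only [hS, Matrix.of_apply, hcond]
      split_ifs <;> ring
    have hx : ∀ x : Fin d × Fin d,
        ∑ y, ((if x = y then (1:ℂ) else 0) + (if (x.2, x.1) = y then 1 else 0)
            + (if x = y then (if (x.2, x.1) = y then (2:ℂ) else 0) else 0))
          = 1 + 1 + (if (x.2, x.1) = x then (2:ℂ) else 0) := by
      intro x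
      rw [Finset.sum_add_distrib, Finset.sum_add_distrib, Finset.sum_ite_eq,
        Finset.sum_ite_eq, Finset.sum_ite_eq]
      simp
    have hy2 : ∀ x : Fin d × Fin d, ∑ y, S x y * (starRingEnd ℂ) (S x y)
        = (c2 : ℂ)^2 * (1 + 1 + (if (x.2, x.1) = x then (2:ℂ) else 0)) := by
      intro x
      simp_rw [hterm x]
      rw [← Finset.mul_sum, hx x]
    simp_rw [hy2]
    rw [← Finset.mul_sum, Finset.sum_add_distrib, Finset.sum_const, Finset.card_univ]
    have hfix : ∑ x : Fin d × Fin d, (if (x.2, x.1) = x then (2:ℂ) else 0) = 2 * (d:ℂ) := by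
      rw [Fintype.sum_prod_type]
      have hc : ∀ a b : Fin d, (((a, b).2, (a, b).1) = (a, b)) ↔ (b = a) := by
        intro a b
        constructor
        · intro h
          exact (Prod.mk.injEq _ _ _ _).mp h |>.1
        · rintro rfl; rfl
      simp_rw [hc]
      simp_rw [Finset.sum_ite_eq']
      simp [Finset.card_univ, mul_comm]
    rw [hfix, Fintype.card_prod, Fintype.card_fin]
    simp only [nsmul_eq_mul]
    push_cast
    ring
  have hTotal : ∑ x : Fin d × Fin d, ∑ y : Fin d × Fin d,
      (T x y - S x y) * (starRingEnd ℂ) (T x y - S x y) = 0 := by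
    have expand : ∀ x y : Fin d × Fin d, (T x y - S x y) * (starRingEnd ℂ) (T x y - S x y)
        = T x y * (starRingEnd ℂ) (T x y) - T x y * (starRingEnd ℂ) (S x y)
          - S x y * (starRingEnd ℂ) (T x y) + S x y * (starRingEnd ℂ) (S x y) := by
      intro x y; rw [map_sub]; ring
    simp_rw [expand]
    simp only [Finset.sum_add_distrib, Finset.sum_sub_distrib]
    rw [hE1, hE2, hE3, hE4]
    rw [← Complex.ofReal_sub, ← Complex.ofReal_sub, ← Complex.ofReal_add,
      Complex.ofReal_eq_zero]
    rw [hE1val, hc2]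
    field_simp
    ring
  have hre : ∑ x : Fin d × Fin d, ∑ y : Fin d × Fin d, Complex.normSq (T x y - S x y) = 0 := by
    have h := hTotal
    simp_rw [Complex.mul_conj] at h
    exact_mod_cast h
  have hTS : T (k, l) (k, l) = S (k, l) (k, l) := by
    have houter := (Finset.sum_eq_zero_iff_of_nonneg
      (fun x _ => Finset.sum_nonneg fun y _ => Complex.normSq_nonneg _)).mp hre (k, l)
      (Finset.mem_univ _)
    have hinner := (Finset.sum_eq_zero_iff_of_nonneg
      (fun y _ => Complex.normSq_nonneg _)).mp houter (k, l) (Finset.mem_univ _)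
    exact sub_eq_zero.mp (Complex.normSq_eq_zero.mp hinner)
  have hL : T (k, l) (k, l)
      = ((∑ μ, Complex.normSq (A μ k) * Complex.normSq (A μ l) : ℝ) : ℂ) := by
    rw [hTxy]
    push_cast
    refine Finset.sum_congr rfl fun μ _ => ?_
    simp only [hwdef]
    rw [Complex.mul_conj, Complex.normSq_mul]
    push_cast
    ring
  have hR : S (k, l) (k, l) = (c2 : ℂ) := by
    simp [hS, Prod.ext_iff, hkl]
  rw [hL, hR] at hTS
  exact_mod_cast hTS

theorem total_qfi_sic_bound {d : ℕ} (hd : 0 < d) (lam : Fin d → ℝ)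
    (v : Fin d → Fin d → ℂ) (ψ : Fin (d ^ 2) → Fin d → ℂ)
    (E : Fin (d ^ 2) → Matrix (Fin d) (Fin d) ℂ)
    (hpos : ∀ k, 0 < lam k) (htr : ∑ k, lam k = 1)
    (hortho : ∀ k l, star (v k) ⬝ᵥ v l = if k = l then 1 else 0)
    (hover : ∀ μ ν, ‖star (ψ μ) ⬝ᵥ ψ ν‖ ^ 2
      = ((d : ℝ) * (if μ = ν then 1 else 0) + 1) / (d + 1))
    (hE : ∀ μ, E μ = ((d : ℂ))⁻¹ • vecMulVec (ψ μ) (star (ψ μ))) :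
    ∑ μ, qfi lam v (E μ) ≤ ((d : ℝ) - 1) / (d * (d + 1)) := by
  classical
  have hdR : (0:ℝ) < d := by exact_mod_cast hd
  have hd1 : (d:ℝ) + 1 ≠ 0 := by positivity
  set A : Fin (d ^ 2) → Fin d → ℂ := fun μ k => star (v k) ⬝ᵥ ψ μ with hA
  -- completeness of the orthonormal basis v
  have hrow : (Matrix.of v) * (Matrix.of v)ᴴ = 1 := by
    ext k l
    have h := congrArg (starRingEnd ℂ) (hortho k l)
    simp only [dotProduct, Pi.star_apply, Complex.star_def, map_sum, _root_.map_mul,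
      Complex.conj_conj] at h
    simp only [Matrix.mul_apply, Matrix.conjTranspose_apply, Matrix.of_apply,
      Matrix.one_apply, Complex.star_def]
    rw [h]
    split_ifs <;> simp
  have hcol : (Matrix.of v)ᴴ * (Matrix.of v) = 1 := mul_eq_one_comm.mp hrow
  have hcompl : ∀ i j : Fin d, ∑ k, (starRingEnd ℂ) (v k i) * v k j
      = if i = j then 1 else 0 := by
    intro i j
    have h := congrFun (congrFun hcol i) j
    simpa [Matrix.mul_apply, Matrix.conjTranspose_apply, Matrix.one_apply,
      Complex.star_def] using h
  have hcompl' : ∀ i j : Fin d, ∑ k, v k i * (starRingEnd ℂ) (v k j)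
      = if i = j then 1 else 0 := by
    intro i j
    have h := congrArg (starRingEnd ℂ) (hcompl i j)
    simp only [map_sum, _root_.map_mul, Complex.conj_conj, apply_ite (starRingEnd ℂ),
      _root_.map_one, _root_.map_zero] at h
    exact h
  -- b μ ν = ⟨ψ μ, ψ ν⟩ expressed through the coefficients A
  have hb : ∀ μ ν, ∑ k, (starRingEnd ℂ) (A μ k) * A ν k = star (ψ μ) ⬝ᵥ ψ ν := by
    intro μ ν
    have step1 : ∀ k, (starRingEnd ℂ) (A μ k) * A ν k
        = ∑ i, ∑ j, (starRingEnd ℂ) (ψ μ i) * ψ ν j * (v k i * (starRingEnd ℂ) (v k j)) := by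
      intro k
      simp only [hA, dotProduct, Pi.star_apply, Complex.star_def, map_sum, _root_.map_mul,
        Complex.conj_conj]
      rw [Finset.sum_mul_sum]
      refine Finset.sum_congr rfl fun i _ => Finset.sum_congr rfl fun j _ => ?_
      ring
    simp_rw [step1]
    rw [Finset.sum_comm]
    have step2 : ∀ i, ∑ k, ∑ j,
        (starRingEnd ℂ) (ψ μ i) * ψ ν j * (v k i * (starRingEnd ℂ) (v k j))
        = (starRingEnd ℂ) (ψ μ i) * ψ ν i := by
      intro i
      rw [Finset.sum_comm]
      have hj : ∀ j, ∑ k, (starRingEnd ℂ) (ψ μ i) * ψ ν j * (v k i * (starRingEnd ℂ) (v k j))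
          = (starRingEnd ℂ) (ψ μ i) * ψ ν j * (if i = j then 1 else 0) := by
        intro j
        rw [← Finset.mul_sum, hcompl' i j]
      simp_rw [hj]
      simp only [mul_ite, mul_one, mul_zero]
      rw [Finset.sum_ite_eq]
      simp
    simp_rw [step2]
    simp [dotProduct, Pi.star_apply, Complex.star_def]
  have hoverA : ∀ μ ν : Fin (d ^ 2),
      Complex.normSq (∑ k, (starRingEnd ℂ) (A μ k) * A ν k)
        = ((d : ℝ) * (if μ = ν then 1 else 0) + 1) / (d + 1) := by
    intro μ ν
    rw [hb, Complex.normSq_eq_norm_sq, hover]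
  have hkey : ∀ k l : Fin d, k ≠ l →
      ∑ μ, Complex.normSq (A μ k) * Complex.normSq (A μ l) = (d : ℝ) / ((d : ℝ) + 1) :=
    fun k l hkl => sic_key hd A hoverA k l hkl
  -- the matrix entries of E μ in the basis v
  have hEntry : ∀ (μ : Fin (d ^ 2)) (k l : Fin d), star (v k) ⬝ᵥ (E μ *ᵥ v l)
      = (d:ℂ)⁻¹ * (A μ k * (starRingEnd ℂ) (A μ l)) := by
    intro μ k l
    rw [hE, Matrix.smul_mulVec]
    have hmv : vecMulVec (ψ μ) (star (ψ μ)) *ᵥ v l = (star (ψ μ) ⬝ᵥ v l) • ψ μ := by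
      ext i
      simp only [Matrix.mulVec, Matrix.vecMulVec_apply, dotProduct, Pi.smul_apply,
        smul_eq_mul, Pi.star_apply, Complex.star_def]
      rw [Finset.sum_mul]
      refine Finset.sum_congr rfl fun j _ => ?_
      ring
    rw [hmv]
    have h1 : star (ψ μ) ⬝ᵥ v l = (starRingEnd ℂ) (A μ l) := by
      simp only [hA, dotProduct, Pi.star_apply, Complex.star_def, map_sum, _root_.map_mul,
        Complex.conj_conj]
      refine Finset.sum_congr rfl fun i _ => mul_comm _ _
    rw [dotProduct_smul, h1, dotProduct_smul]
    simp only [smul_eq_mul, hA]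
    ring
  -- rewrite each qfi term
  have hqfi : ∀ μ, qfi lam v (E μ)
      = ∑ k, ∑ l, (lam k - lam l) ^ 2 / (2 * (lam k + lam l)) *
          (((d:ℝ)^2)⁻¹ * (Complex.normSq (A μ k) * Complex.normSq (A μ l))) := by
    intro μ
    rw [qfi]
    refine Finset.sum_congr rfl fun k _ => Finset.sum_congr rfl fun l _ => ?_
    rw [hEntry]
    congr 1
    have h2 : ‖(d:ℂ)⁻¹ * (A μ k * (starRingEnd ℂ) (A μ l))‖ ^ 2
        = Complex.normSq ((d:ℂ)⁻¹ * (A μ k * (starRingEnd ℂ) (A μ l))) := by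
      rw [Complex.sq_norm]
    rw [h2, Complex.normSq_mul, Complex.normSq_mul, Complex.normSq_inv,
      Complex.normSq_conj, Complex.normSq_natCast]
    ring
  have hswap : ∑ μ, qfi lam v (E μ)
      = ∑ k, ∑ l, (lam k - lam l) ^ 2 / (2 * (lam k + lam l)) *
          (((d:ℝ)^2)⁻¹ * ∑ μ, Complex.normSq (A μ k) * Complex.normSq (A μ l)) := by
    simp_rw [hqfi]
    rw [Finset.sum_comm]
    refine Finset.sum_congr rfl fun k _ => ?_
    rw [Finset.sum_comm]
    refine Finset.sum_congr rfl fun l _ => ?_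
    rw [← Finset.mul_sum, ← Finset.mul_sum]
  rw [hswap]
  set C : ℝ := (2 * ((d:ℝ) * ((d:ℝ) + 1)))⁻¹ with hC
  have hbound : ∀ k l : Fin d, (lam k - lam l) ^ 2 / (2 * (lam k + lam l)) *
      (((d:ℝ)^2)⁻¹ * ∑ μ, Complex.normSq (A μ k) * Complex.normSq (A μ l))
      ≤ (if k = l then 0 else (lam k + lam l) * C) := by
    intro k l
    by_cases hkl : k = l
    · subst hkl; simp
    · rw [if_neg hkl, hkey k l hkl]
      have hpos2 : (0:ℝ) < lam k + lam l := by have := hpos k; have := hpos l; linarith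
      have h1 : (lam k - lam l) ^ 2 / (2 * (lam k + lam l)) ≤ (lam k + lam l) / 2 := by
        rw [div_le_div_iff₀ (by linarith) (by norm_num)]
        nlinarith [hpos k, hpos l, mul_pos (hpos k) (hpos l)]
      calc (lam k - lam l) ^ 2 / (2 * (lam k + lam l)) * (((d:ℝ)^2)⁻¹ * ((d:ℝ)/((d:ℝ)+1)))
          ≤ (lam k + lam l) / 2 * (((d:ℝ)^2)⁻¹ * ((d:ℝ)/((d:ℝ)+1))) := by
            apply mul_le_mul_of_nonneg_right h1
            positivity
        _ = (lam k + lam l) * C := by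
            rw [hC]; field_simp
  calc ∑ k, ∑ l, (lam k - lam l) ^ 2 / (2 * (lam k + lam l)) *
          (((d:ℝ)^2)⁻¹ * ∑ μ, Complex.normSq (A μ k) * Complex.normSq (A μ l))
      ≤ ∑ k, ∑ l, (if k = l then 0 else (lam k + lam l) * C) :=
        Finset.sum_le_sum fun k _ => Finset.sum_le_sum fun l _ => hbound k l
    _ = ((d : ℝ) - 1) / ((d:ℝ) * ((d:ℝ) + 1)) := by
        have hrow2 : ∀ k, ∑ l, (if k = l then 0 else (lam k + lam l) * C)
            = ((d:ℝ) * lam k + 1) * C - 2 * lam k * C := by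
          intro k
          have hsplit : ∀ l, (if k = l then (0:ℝ) else (lam k + lam l) * C)
              = (lam k + lam l) * C - (if k = l then (lam k + lam l) * C else 0) := by
            intro l; split <;> ring
          simp_rw [hsplit]
          rw [Finset.sum_sub_distrib, Finset.sum_ite_eq]
          simp only [Finset.mem_univ, if_pos]
          have hsum : ∑ l, (lam k + lam l) * C = ((d:ℝ) * lam k + 1) * C := by
            rw [← Finset.sum_mul, Finset.sum_add_distrib, Finset.sum_const, htr,
              Finset.card_univ, Fintype.card_fin, nsmul_eq_mul]
          rw [hsum]; ring
        simp_rw [hrow2]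
        rw [Finset.sum_sub_distrib]
        have h3 : ∑ k, ((d:ℝ) * lam k + 1) * C = ((d:ℝ) + (d:ℝ)) * C := by
          rw [← Finset.sum_mul, Finset.sum_add_distrib, ← Finset.mul_sum, htr,
            Finset.sum_const, Finset.card_univ, Fintype.card_fin, nsmul_eq_mul]
          ring
        have h4 : ∑ k, 2 * lam k * C = 2 * C := by
          have : ∀ k, 2 * lam k * C = lam k * (2 * C) := fun k => by ring
          simp_rw [this]
          rw [← Finset.sum_mul, htr, one_mul]
        rw [h3, h4, hC]
        field_simp
        ring
end
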